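/- arXiv:2402.17167 — 2 statements merged into one kernel-verified Lean document; each statement's English description precedes it below -/
import Mathlib

section
/- Let φ : [0,T] → ℝⁿ be a solution of ẋ = f(x,d(t)) with φ(0) = x₀ ∈ 𝒳₀, and suppose v : ℝⁿ × [0,T] → ℝ is continuously differentiable with v(x₀,0) < 0, v(x,t) ≥ 0 for all (x,t) ∈ ∂S × [0,T], and ∂v/∂t(x,t) + ⟨∇ₓv(x,t), f(x,d)⟩ ≤ 0 for all x in the closure of S, d ∈ D, t ∈ [0,T]. Then, if φ remains in the closure of S on [0,T], it satisfies φ(t) ∈ S for all t ∈ [0,T], i.e., the trajectory never touches ∂S. -/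
/-!
Along `γ t = (φ t, t)` the barrier value `g t = v (γ t)` is nonincreasing. The curve `γ` is only
absolutely continuous, so `g` need not be differentiable; but over a short interval `[x, z]` the
linear part `Dv (γ x) (γ z - γ x) = ∫ Dv (γ x) (γ' s) ds` differs by `o(z - x)` from
`∫ Dv (γ s) (γ' s) ds ≤ 0`, because `Dv` is continuous and `γ'` is bounded. Hence every right
Dini derivative of `g` is `≤ 0`, and `v (φ t) t ≤ v x₀ 0 < 0 ≤ v` on `∂S`, so `φ t ∉ ∂S`.
-/

open Set MeasureTheory Topology Filter
open scoped Interval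

theorem antitoneOn_of_eventually_sub_le_mul {f : ℝ → ℝ} {a b : ℝ} (hf : ContinuousOn f (Icc a b))
    (h : ∀ x ∈ Ico a b, ∀ ε > 0, ∀ᶠ z in 𝓝[>] x, f z - f x ≤ ε * (z - x)) :
    AntitoneOn f (Icc a b) := by
  intro x hx y hy hxy
  refine image_le_of_liminf_slope_right_le_deriv_boundary (hf.mono (Icc_subset_Icc hx.1 hy.2))
    (B := fun _ => f x) (B' := 0) le_rfl continuousOn_const
    (fun _ _ => hasDerivWithinAt_const _ _ _) ?_ (right_mem_Icc.2 hxy)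
  intro w hw r hr
  have hwI : w ∈ Ico a b := ⟨hx.1.trans hw.1, hw.2.trans_le hy.2⟩
  refine Eventually.frequently ?_
  filter_upwards [h w hwI (r / 2) (half_pos hr), self_mem_nhdsWithin] with z hz hwz
  rw [slope_def_field, div_lt_iff₀ (sub_pos.2 hwz)]
  nlinarith [mul_pos hr (sub_pos.2 (show w < z from hwz))]

theorem fderiv_apply_mk_eq_add {E F G : Type*} [NormedAddCommGroup E]
    [NormedSpace ℝ E] [NormedAddCommGroup F] [NormedSpace ℝ F] [NormedAddCommGroup G]
    [NormedSpace ℝ G] {V : E × F → G} {x : E} {t : F} (hV : DifferentiableAt ℝ V (x, t))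
    (w : E) (u : F) :
    fderiv ℝ V (x, t) (w, u) =
      fderiv ℝ (fun y => V (y, t)) x w + fderiv ℝ (fun s => V (x, s)) t u := by
  have h₁ : HasFDerivAt (fun y => V (y, t)) ((fderiv ℝ V (x, t)).comp (.inl ℝ E F)) x :=
    hV.hasFDerivAt.comp x (hasFDerivAt_prodMk_left x t)
  have h₂ : HasFDerivAt (fun s => V (x, s)) ((fderiv ℝ V (x, t)).comp (.inr ℝ E F)) t :=
    hV.hasFDerivAt.comp t (hasFDerivAt_prodMk_right x t)
  rw [h₁.fderiv, h₂.fderiv]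
  exact ((fderiv ℝ V (x, t)).comp_inl_add_comp_inr (w, u)).symm

section
variable {E : Type*} [NormedAddCommGroup E] [NormedSpace ℝ E]

theorem norm_sub_le_of_eq_integral {γ P : ℝ → E} {x z M : ℝ} (hxz : x ≤ z)
    (hγ : γ z - γ x = ∫ s in x..z, P s) (hPM : ∀ s ∈ Icc x z, ‖P s‖ ≤ M) :
    ‖γ z - γ x‖ ≤ M * (z - x) := by
  rw [hγ, ← abs_of_nonneg (sub_nonneg.2 hxz)]
  refine intervalIntegral.norm_integral_le_of_norm_le_const fun s hs => hPM s ?_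
  rw [uIoc_of_le hxz] at hs
  exact Ioc_subset_Icc_self hs

theorem apply_intervalIntegral_le_of_norm_sub_le [CompleteSpace E] {L : E →L[ℝ] ℝ}
    {G : ℝ → E →L[ℝ] ℝ} {P : ℝ → E} {x z M η : ℝ} (hxz : x ≤ z)
    (hP : IntervalIntegrable P volume x z) (hPM : ∀ s ∈ Icc x z, ‖P s‖ ≤ M)
    (hGP : ∀ s ∈ Icc x z, G s (P s) ≤ 0) (hGL : ∀ s ∈ Icc x z, ‖L - G s‖ ≤ η) :
    L (∫ s in x..z, P s) ≤ η * M * (z - x) := by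
  have hpoint : ∀ s ∈ Icc x z, L (P s) ≤ η * M := fun s hs =>
    calc L (P s) = (L - G s) (P s) + G s (P s) := by simp
      _ ≤ ‖L - G s‖ * ‖P s‖ + 0 :=
        add_le_add ((le_abs_self _).trans ((L - G s).le_opNorm _)) (hGP s hs)
      _ ≤ η * M := by
        rw [add_zero]
        exact mul_le_mul (hGL s hs) (hPM s hs) (norm_nonneg _) ((norm_nonneg _).trans (hGL s hs))
  calc L (∫ s in x..z, P s) = ∫ s in x..z, L (P s) := (L.intervalIntegral_comp_comm hP).symm
    _ ≤ ∫ _ in x..z, η * M := intervalIntegral.integral_mono_on hxz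
        ⟨L.integrable_comp hP.1, L.integrable_comp hP.2⟩ intervalIntegrable_const hpoint
    _ = η * M * (z - x) := by rw [intervalIntegral.integral_const, smul_eq_mul, mul_comm]
end

section
variable {E : Type*} [NormedAddCommGroup E] [NormedSpace ℝ E] [CompleteSpace E]
  {V : E → ℝ} {γ P : ℝ → E} {a b M : ℝ}

theorem eventually_comp_sub_le_mul (hV : ContDiff ℝ 1 V) (hγc : ContinuousOn γ (Icc a b))
    (hP : IntervalIntegrable P volume a b)
    (hγ : ∀ x ∈ Icc a b, ∀ z ∈ Icc a b, γ z - γ x = ∫ s in x..z, P s)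
    (hPM : ∀ s ∈ Icc a b, ‖P s‖ ≤ M) (hdesc : ∀ s ∈ Icc a b, fderiv ℝ V (γ s) (P s) ≤ 0)
    {x : ℝ} (hx : x ∈ Ico a b) {ε : ℝ} (hε : 0 < ε) :
    ∀ᶠ z in 𝓝[>] x, V (γ z) - V (γ x) ≤ ε * (z - x) := by
  have hxI : x ∈ Icc a b := Ico_subset_Icc_self hx
  have hM : 0 ≤ M := (norm_nonneg _).trans (hPM x hxI)
  set η := ε / (2 * (M + 1))
  have hη : 0 < η := by positivity
  have hηM : 2 * η * M ≤ ε := by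
    have : 2 * η * (M + 1) = ε := by simp only [η]; field_simp
    nlinarith
  set L := fderiv ℝ V (γ x)
  have hγx : Tendsto γ (𝓝[≥] x) (𝓝 (γ x)) :=
    (hγc x hxI).mono_of_mem_nhdsWithin (Icc_mem_nhdsGE_of_mem hx)
  have hnear : ∀ᶠ s in 𝓝[≥] x, s ∈ Icc a b ∧ ‖L - fderiv ℝ V (γ s)‖ ≤ η := by
    refine Eventually.and (Icc_mem_nhdsGE_of_mem hx) ?_
    have := ((hV.continuous_fderiv one_ne_zero).tendsto (γ x)).comp hγx
    filter_upwards [Metric.tendsto_nhds.1 this η hη] with s hs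
    rw [← dist_eq_norm, dist_comm]
    exact hs.le
  obtain ⟨u, hxu, hu⟩ := mem_nhdsGE_iff_exists_Ico_subset.1 hnear
  have hlin : ∀ᶠ z in 𝓝[≥] x, ‖V (γ z) - V (γ x) - L (γ z - γ x)‖ ≤ η * ‖γ z - γ x‖ :=
    hγx.eventually ((hV.differentiable one_ne_zero (γ x)).hasFDerivAt.isLittleO.def hη)
  filter_upwards [nhdsWithin_mono x Ioi_subset_Ici_self hlin, Ioo_mem_nhdsGT hxu]
    with z hz hzu
  have hxz : x ≤ z := hzu.1.le
  have hIxz : ∀ s ∈ Icc x z, s ∈ Icc a b ∧ ‖L - fderiv ℝ V (γ s)‖ ≤ η :=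
    fun s hs => hu (Icc_subset_Ico_right hzu.2 hs)
  have hzI : z ∈ Icc a b := (hIxz z (right_mem_Icc.2 hxz)).1
  have hγxz := hγ x hxI z hzI
  have hPxz : IntervalIntegrable P volume x z :=
    hP.mono_set (uIcc_subset_uIcc (Icc_subset_uIcc hxI) (Icc_subset_uIcc hzI))
  have hPM' : ∀ s ∈ Icc x z, ‖P s‖ ≤ M := fun s hs => hPM s (hIxz s hs).1
  have hLγ : L (γ z - γ x) ≤ η * M * (z - x) :=
    hγxz ▸ apply_intervalIntegral_le_of_norm_sub_le hxz hPxz hPM'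
      (fun s hs => hdesc s (hIxz s hs).1) (fun s hs => (hIxz s hs).2)
  calc V (γ z) - V (γ x) = (V (γ z) - V (γ x) - L (γ z - γ x)) + L (γ z - γ x) := by ring
    _ ≤ η * (M * (z - x)) + η * M * (z - x) := by
      gcongr
      exact (Real.le_norm_self _).trans
        (hz.trans (by gcongr; exact norm_sub_le_of_eq_integral hxz hγxz hPM'))
    _ ≤ ε * (z - x) := by nlinarith [sub_nonneg.2 hxz]

theorem antitoneOn_comp_of_eq_integral (hV : ContDiff ℝ 1 V) (hγc : ContinuousOn γ (Icc a b))
    (hP : IntervalIntegrable P volume a b)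
    (hγ : ∀ x ∈ Icc a b, ∀ z ∈ Icc a b, γ z - γ x = ∫ s in x..z, P s)
    (hPM : ∀ s ∈ Icc a b, ‖P s‖ ≤ M) (hdesc : ∀ s ∈ Icc a b, fderiv ℝ V (γ s) (P s) ≤ 0) :
    AntitoneOn (fun t => V (γ t)) (Icc a b) :=
  antitoneOn_of_eventually_sub_le_mul (hV.continuous.comp_continuousOn hγc)
    fun _ hx _ hε => eventually_comp_sub_le_mul hV hγc hP hγ hPM hdesc hx hε

end

theorem intervalIntegral.integral_pair {E F : Type*} [NormedAddCommGroup E] [NormedSpace ℝ E]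
    [CompleteSpace E] [NormedAddCommGroup F] [NormedSpace ℝ F] [CompleteSpace F]
    {f : ℝ → E} {g : ℝ → F} {a b : ℝ} (hf : IntervalIntegrable f volume a b)
    (hg : IntervalIntegrable g volume a b) :
    ∫ s in a..b, (f s, g s) = (∫ s in a..b, f s, ∫ s in a..b, g s) := by
  simp only [intervalIntegral, _root_.integral_pair hf.1 hg.1,
    _root_.integral_pair hf.2 hg.2, Prod.mk_sub_mk]

theorem exists_norm_comp_le {E U : Type*} [NormedAddCommGroup E] [TopologicalSpace U]
    {f : E → U → E} {φ : ℝ → E} {d : ℝ → U} {D : Set U} {a b : ℝ}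
    (hf : Continuous fun p : E × U => f p.1 p.2) (hD : IsCompact D)
    (hdD : ∀ t, d t ∈ D) (hφc : ContinuousOn φ (Icc a b)) :
    ∃ C, ∀ s ∈ Icc a b, ‖f (φ s) (d s)‖ ≤ C := by
  obtain ⟨C, hC⟩ := ((isCompact_Icc.image_of_continuousOn hφc).prod hD).exists_bound_of_continuousOn
    hf.continuousOn
  exact ⟨C, fun s hs => hC (φ s, d s) ⟨mem_image_of_mem φ hs, hdD s⟩⟩

theorem intervalIntegrable_comp_of_norm_le {E U : Type*} [NormedAddCommGroup E]
    [MeasurableSpace E] [BorelSpace E] [SecondCountableTopology E] [TopologicalSpace U]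
    [MeasurableSpace U] [BorelSpace U] [SecondCountableTopology U]
    {f : E → U → E} {φ : ℝ → E} {d : ℝ → U} {a b : ℝ} (hf : Continuous fun p : E × U => f p.1 p.2)
    (hd : Measurable d) (hφc : ContinuousOn φ (Icc a b)) (hab : a ≤ b) {C : ℝ}
    (hC : ∀ s ∈ Icc a b, ‖f (φ s) (d s)‖ ≤ C) :
    IntervalIntegrable (fun s => f (φ s) (d s)) volume a b := by
  have hΙ : Ι a b ⊆ Icc a b := by
    rw [uIoc_of_le hab]
    exact Ioc_subset_Icc_self
  refine IntervalIntegrable.mono_fun' (g := fun _ => C) intervalIntegrable_const ?_ ?_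
  · exact (hf.measurable.comp_aemeasurable (((hφc.mono hΙ).aemeasurable measurableSet_uIoc).prodMk
      hd.aemeasurable)).aestronglyMeasurable
  · filter_upwards [ae_restrict_mem measurableSet_uIoc] with s hs using hC s (hΙ hs)

theorem prodMk_sub_prodMk_eq_integral {E : Type*} [NormedAddCommGroup E] [NormedSpace ℝ E]
    [CompleteSpace E] {φ F : ℝ → E} {x₀ : E} {a b : ℝ} (hF : IntervalIntegrable F volume a b)
    (hφ : ∀ t ∈ Icc a b, φ t = x₀ + ∫ s in a..t, F s) :
    ∀ x ∈ Icc a b, ∀ z ∈ Icc a b, (φ z, z) - (φ x, x) = ∫ s in x..z, (F s, (1 : ℝ)) := by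
  intro x hx z hz
  have hsub : ∀ y ∈ Icc a b, ∀ y' ∈ Icc a b, IntervalIntegrable F volume y y' :=
    fun y hy y' hy' => hF.mono_set (uIcc_subset_uIcc (Icc_subset_uIcc hy) (Icc_subset_uIcc hy'))
  have ha : a ∈ Icc a b := ⟨le_rfl, hx.1.trans hx.2⟩
  rw [intervalIntegral.integral_pair (hsub x hx z hz) intervalIntegrable_const,
    intervalIntegral.integral_const, smul_eq_mul, mul_one, Prod.mk_sub_mk, hφ z hz, hφ x hx,
    add_sub_add_left_eq_sub, intervalIntegral.integral_interval_sub_left (hsub a ha z hz)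
      (hsub a ha x hx)]

theorem trajectory_avoids_boundary_general
    {n m : ℕ} (S : Set (EuclideanSpace ℝ (Fin n))) (D : Set (EuclideanSpace ℝ (Fin m)))
    (hSopen : IsOpen S)
    (hD : IsCompact D)
    (T : ℝ) (hT : 0 < T)
    (f : EuclideanSpace ℝ (Fin n) → EuclideanSpace ℝ (Fin m) → EuclideanSpace ℝ (Fin n))
    (hf : Continuous fun p : EuclideanSpace ℝ (Fin n) × EuclideanSpace ℝ (Fin m) => f p.1 p.2)
    (d : ℝ → EuclideanSpace ℝ (Fin m)) (hd : Measurable d) (hdD : ∀ t, d t ∈ D)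
    (x₀ : EuclideanSpace ℝ (Fin n))
    (φ : ℝ → EuclideanSpace ℝ (Fin n)) (hφc : ContinuousOn φ (Icc 0 T))
    (hφ0 : φ 0 = x₀)
    (hODE : ∀ t ∈ Icc (0:ℝ) T, φ t = x₀ + ∫ s in (0:ℝ)..t, f (φ s) (d s))
    (v : EuclideanSpace ℝ (Fin n) → ℝ → ℝ)
    (hv : ContDiff ℝ 1 (fun p : EuclideanSpace ℝ (Fin n) × ℝ => v p.1 p.2))
    (hv0 : v x₀ 0 < 0)
    (hvb : ∀ x ∈ frontier S, ∀ t ∈ Icc (0:ℝ) T, 0 ≤ v x t)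
    (hLv : ∀ x ∈ closure S, ∀ dd ∈ D, ∀ t ∈ Icc (0:ℝ) T,
      fderiv ℝ (fun s => v x s) t 1 + fderiv ℝ (fun y => v y t) x (f x dd) ≤ 0)
    (hstay : ∀ t ∈ Icc (0:ℝ) T, φ t ∈ closure S) :
    ∀ t ∈ Icc (0:ℝ) T, φ t ∈ S := by
  obtain ⟨C, hC⟩ := exists_norm_comp_le hf hD hdD hφc
  have hF := intervalIntegrable_comp_of_norm_le hf hd hφc hT.le hC
  have hdesc : ∀ s ∈ Icc 0 T,
      fderiv ℝ (fun p : EuclideanSpace ℝ (Fin n) × ℝ => v p.1 p.2) (φ s, s)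
        (f (φ s) (d s), 1) ≤ 0 :=
    fun s hs => ((fderiv_apply_mk_eq_add (hv.differentiable one_ne_zero _) _ _).trans
      (add_comm _ _)).trans_le (hLv (φ s) (hstay s hs) (d s) (hdD s) s hs)
  have hanti := antitoneOn_comp_of_eq_integral hv (hφc.prodMk continuousOn_id)
    ⟨hF.1.prodMk (intervalIntegrable_const (c := (1 : ℝ))).1,
      hF.2.prodMk (intervalIntegrable_const (c := (1 : ℝ))).2⟩
    (prodMk_sub_prodMk_eq_integral hF hODE) (M := max C 1)
    (fun s hs => norm_prod_le_iff.2 ⟨(hC s hs).trans (le_max_left _ _), by simp⟩) hdesc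
  intro t ht
  by_contra hnot
  have hfr : φ t ∈ frontier S := ⟨hstay t ht, by rwa [hSopen.interior_eq]⟩
  have hdecr : v (φ t) t ≤ v x₀ 0 := hφ0 ▸ hanti ⟨le_rfl, ht.1.trans ht.2⟩ ht ht.1
  linarith [hvb _ hfr t ht]

/-- A trajectory φ of ẋ = f(x,d(t)) (integral form) starting at x₀ ∈ 𝒳₀,
together with a C¹ barrier function v with v(x₀,0) < 0, v ≥ 0 on ∂S × [0,T],
and Lv ≤ 0 on closure(S) × D × [0,T], never touches ∂S if it remains in closure(S):
φ(t) ∈ S for all t ∈ [0,T]. -/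
theorem trajectory_avoids_boundary
    {n m : ℕ} (S X0 : Set (EuclideanSpace ℝ (Fin n))) (D : Set (EuclideanSpace ℝ (Fin m)))
    (hSopen : IsOpen S) (hSbdd : Bornology.IsBounded S)
    (hX0 : IsCompact X0) (hX0S : X0 ⊆ S) (hD : IsCompact D)
    (T : ℝ) (hT : 0 < T)
    (f : EuclideanSpace ℝ (Fin n) → EuclideanSpace ℝ (Fin m) → EuclideanSpace ℝ (Fin n))
    (hf : Continuous fun p : EuclideanSpace ℝ (Fin n) × EuclideanSpace ℝ (Fin m) => f p.1 p.2)
    (d : ℝ → EuclideanSpace ℝ (Fin m)) (hd : Measurable d) (hdD : ∀ t, d t ∈ D)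
    (x₀ : EuclideanSpace ℝ (Fin n)) (hx₀ : x₀ ∈ X0)
    (φ : ℝ → EuclideanSpace ℝ (Fin n)) (hφc : ContinuousOn φ (Icc 0 T))
    (hφ0 : φ 0 = x₀)
    (hODE : ∀ t ∈ Icc (0:ℝ) T, φ t = x₀ + ∫ s in (0:ℝ)..t, f (φ s) (d s))
    (v : EuclideanSpace ℝ (Fin n) → ℝ → ℝ)
    (hv : ContDiff ℝ 1 (fun p : EuclideanSpace ℝ (Fin n) × ℝ => v p.1 p.2))
    (hv0 : v x₀ 0 < 0)
    (hvb : ∀ x ∈ frontier S, ∀ t ∈ Icc (0:ℝ) T, 0 ≤ v x t)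
    (hLv : ∀ x ∈ closure S, ∀ dd ∈ D, ∀ t ∈ Icc (0:ℝ) T,
      fderiv ℝ (fun s => v x s) t 1 + fderiv ℝ (fun y => v y t) x (f x dd) ≤ 0)
    (hstay : ∀ t ∈ Icc (0:ℝ) T, φ t ∈ closure S) :
    ∀ t ∈ Icc (0:ℝ) T, φ t ∈ S :=
  trajectory_avoids_boundary_general S D hSopen hD T hT f hf d hd hdD x₀ φ hφc hφ0 hODE v hv hv0 hvb
    hLv hstay
end

section
/- If there exists a continuously differentiable function v : ℝⁿ × [0,T] → ℝ with (i) v(x,0) < 0 for all x ∈ 𝒳₀, (ii) v(x,t) ≥ 0 for all (x,t) ∈ ∂S × [0,T], and (iii) ∂v/∂t(x,t) + ⟨∇ₓv(x,t), f(x,d)⟩ ≤ 0 for all (x,d,t) ∈ closure(S) × D × [0,T], then every solution φ of ẋ = f(x,d(t)) starting in 𝒳₀ at t = 0 remains in S for all t ∈ [0,T]. -/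
/-!
Along a solution, `g t = v (φ t) t` is negative at `t = 0`, and if `φ` ever left `S` then at the
first exit time `τ` the point `φ τ` lies on `∂S`, where `g τ ≥ 0`. Because `d` is only measurable,
`φ` is merely Lipschitz and `g` need not be differentiable, so we work with right Dini
derivatives: for `t < τ`, expanding `v` to first order at `(φ t, t)` and writing
`φ z - φ t = ∫ s in t..z, f (φ s) (d s)`, the Lipschitz bound on `f` (uniform in the disturbance)
replaces `f (φ s) (d s)` by `f (φ t) (d s)` up to `o(1)`, and condition (iii) at `φ t ∈ closure S`
makes every right difference quotient of `g` at `t` at most `o(1)`. A continuous function with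
nonpositive upper right Dini derivative is nonincreasing, so `g τ ≤ g 0 < 0`.
-/

open Set Filter Topology MeasureTheory TopologicalSpace Asymptotics

theorem exists_first_exit {X : Type*} [TopologicalSpace X] {S : Set X} (hS : IsOpen S)
    {φ : ℝ → X} {a b t : ℝ} (hφ : ContinuousOn φ (Icc a b)) (ha : φ a ∈ S)
    (ht : t ∈ Icc a b) (hout : φ t ∉ S) :
    ∃ τ ∈ Ioc a b, φ τ ∈ frontier S ∧ ∀ s ∈ Ico a τ, φ s ∈ S := by
  set exits := Icc a b ∩ φ ⁻¹' Sᶜ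
  have hbdd : BddBelow exits := ⟨a, fun s hs => hs.1.1⟩
  have hτ : sInf exits ∈ exits :=
    (hφ.preimage_isClosed_of_isClosed isClosed_Icc hS.isClosed_compl).csInf_mem
      ⟨t, ht, hout⟩ hbdd
  set τ := sInf exits
  have hbefore : ∀ s ∈ Ico a τ, φ s ∈ S := fun s hs => by
    by_contra hsS
    exact hs.2.not_ge (csInf_le hbdd ⟨⟨hs.1, hs.2.le.trans hτ.1.2⟩, hsS⟩)
  have haτ : a < τ := hτ.1.1.lt_of_ne fun h => hτ.2 (h ▸ ha)
  refine ⟨τ, ⟨haτ, hτ.1.2⟩, ?_, hbefore⟩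
  have hτ_cl : τ ∈ closure (Ico a τ) := by rw [closure_Ico haτ.ne]; exact right_mem_Icc.2 haτ.le
  have hcl : φ τ ∈ closure S :=
    closure_mono (image_subset_iff.2 hbefore)
      (((hφ τ hτ.1).mono fun s hs => ⟨hs.1, hs.2.le.trans hτ.1.2⟩).mem_closure_image hτ_cl)
  rw [hS.frontier_eq]
  exact ⟨hcl, hτ.2⟩

theorem image_le_left_of_eventually_slope_lt {g : ℝ → ℝ} {a b : ℝ} (hab : a ≤ b)
    (hg : ContinuousOn g (Icc a b))
    (hslope : ∀ x ∈ Ico a b, ∀ ε > 0, ∀ᶠ z in 𝓝[>] x, slope g x z < ε) : g b ≤ g a :=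
  image_le_of_liminf_slope_right_le_deriv_boundary hg (B := fun _ => g a) le_rfl
    continuousOn_const (B' := fun _ => 0) (fun x _ => hasDerivWithinAt_const x _ _)
    (fun x hx r hr => (hslope x hx r hr).frequently) (right_mem_Icc.2 hab)

section Partial
variable {𝕜 E F G : Type*} [NontriviallyNormedField 𝕜] [NormedAddCommGroup E] [NormedSpace 𝕜 E]
  [NormedAddCommGroup F] [NormedSpace 𝕜 F] [NormedAddCommGroup G] [NormedSpace 𝕜 G]
  {v : E → F → G} {x : E} {t : F}

theorem fderiv_partial_fst (hv : DifferentiableAt 𝕜 (fun p : E × F => v p.1 p.2) (x, t)) :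
    fderiv 𝕜 (fun y => v y t) x =
      (fderiv 𝕜 (fun p : E × F => v p.1 p.2) (x, t)).comp (ContinuousLinearMap.inl 𝕜 E F) := by
  exact (hv.hasFDerivAt.comp x (hasFDerivAt_prodMk_left (𝕜 := 𝕜) x t)).fderiv

theorem fderiv_partial_snd (hv : DifferentiableAt 𝕜 (fun p : E × F => v p.1 p.2) (x, t)) :
    fderiv 𝕜 (fun s => v x s) t =
      (fderiv 𝕜 (fun p : E × F => v p.1 p.2) (x, t)).comp (ContinuousLinearMap.inr 𝕜 E F) := by
  exact (hv.hasFDerivAt.comp t (hasFDerivAt_prodMk_right (𝕜 := 𝕜) x t)).fderiv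

end Partial

theorem ContinuousOn.aestronglyMeasurable_comp {α X G : Type*} [MeasurableSpace α]
    [TopologicalSpace X] [MeasurableSpace X] [OpensMeasurableSpace X] [TopologicalSpace G]
    [PseudoMetrizableSpace G] [SecondCountableTopologyEither X G] {μ : Measure α}
    {g : X → G} {C : Set X} (hg : ContinuousOn g C) (hC : MeasurableSet C) {ψ : α → X}
    (hψ : AEMeasurable ψ μ) (hψC : ∀ᵐ a ∂μ, ψ a ∈ C) : AEStronglyMeasurable (g ∘ ψ) μ := by
  have hg' := hg.aestronglyMeasurable hC (μ := μ.map ψ)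
  rw [Measure.restrict_eq_self_of_ae_mem ((ae_map_iff hψ hC).2 hψC)] at hg'
  exact hg'.comp_aemeasurable hψ

theorem exists_bound_integrableOn_comp {X Y G : Type*} [MetricSpace X] [MeasurableSpace X]
    [BorelSpace X] [SecondCountableTopology X] [MetricSpace Y] [MeasurableSpace Y] [BorelSpace Y]
    [SecondCountableTopology Y] [NormedAddCommGroup G] {g : X → Y → G} {K : Set X} {D : Set Y}
    (hK : IsCompact K) (hD : IsCompact D) (hg : ContinuousOn (Function.uncurry g) (K ×ˢ D))
    {φ : ℝ → X} {d : ℝ → Y} {a b : ℝ} (hφ : ContinuousOn φ (Icc a b))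
    (hφK : MapsTo φ (Icc a b) K) (hd : Measurable d) (hdD : ∀ s, d s ∈ D) :
    ∃ C, IntegrableOn (fun s => g (φ s) (d s)) (Icc a b) ∧
      ∀ s ∈ Icc a b, ‖g (φ s) (d s)‖ ≤ C := by
  obtain ⟨C, hC⟩ := (hK.prod hD).exists_bound_of_continuousOn hg
  have hgC : ∀ s ∈ Icc a b, ‖g (φ s) (d s)‖ ≤ C := fun s hs => hC (φ s, d s) ⟨hφK hs, hdD s⟩
  have hmeas : AEStronglyMeasurable (fun s => g (φ s) (d s)) (volume.restrict (Icc a b)) :=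
    hg.aestronglyMeasurable_comp (hK.prod hD).isClosed.measurableSet
      ((hφ.aemeasurable measurableSet_Icc).prodMk hd.aemeasurable)
      (ae_restrict_of_forall_mem measurableSet_Icc fun s hs => ⟨hφK hs, hdD s⟩)
  exact ⟨C, .of_bound measure_Icc_lt_top hmeas C (ae_restrict_of_forall_mem measurableSet_Icc hgC),
    hgC⟩

section Trajectory
variable {E : Type*} [NormedAddCommGroup E] [NormedSpace ℝ E] {φ F : ℝ → E} {t T : ℝ}

theorem sub_eq_integral_of_eq_add_integral [CompleteSpace E] {x₀ : E} {a b z : ℝ}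
    (hF : IntegrableOn F (Icc a b)) (hφ : ∀ s ∈ Icc a b, φ s = x₀ + ∫ r in a..s, F r)
    (ht : t ∈ Icc a b) (hz : z ∈ Icc a b) : φ z - φ t = ∫ s in t..z, F s := by
  have hint : ∀ s ∈ Icc a b, IntervalIntegrable F volume a s := fun s hs =>
    (intervalIntegrable_iff_integrableOn_Icc_of_le hs.1).2 (hF.mono_set (Icc_subset_Icc_right hs.2))
  rw [hφ z hz, hφ t ht, add_sub_add_left_eq_sub,
    intervalIntegral.integral_interval_sub_left (hint z hz) (hint t ht)]

theorem isBigO_sub_of_eq_integral {C : ℝ} (htT : t < T) (hFC : ∀ s ∈ Icc t T, ‖F s‖ ≤ C)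
    (hφ : ∀ z ∈ Icc t T, φ z - φ t = ∫ s in t..z, F s) :
    (fun z => φ z - φ t) =O[𝓝[≥] t] (fun z => z - t) := by
  refine .of_bound C ?_
  filter_upwards [Icc_mem_nhdsGE htT] with z hz
  rw [hφ z hz, Real.norm_eq_abs]
  refine intervalIntegral.norm_integral_le_of_norm_le_const fun s hs => hFC s ?_
  rw [uIoc_of_le hz.1] at hs
  exact ⟨hs.1.le, hs.2.trans hz.2⟩

theorem eventually_apply_sub_le_of_eq_integral [CompleteSpace E] {ℓ : E →L[ℝ] ℝ} {c : ℝ}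
    (htT : t < T) (hF : IntegrableOn F (Icc t T)) (hφ : ∀ z ∈ Icc t T, φ z - φ t = ∫ s in t..z, F s)
    (hℓF : ∀ ε > 0, ∀ᶠ s in 𝓝[≥] t, ℓ (F s) ≤ c + ε) :
    ∀ ε > 0, ∀ᶠ z in 𝓝[>] t, ℓ (φ z - φ t) ≤ (c + ε) * (z - t) := by
  intro ε hε
  obtain ⟨u, hu, hbound⟩ := mem_nhdsGE_iff_exists_Ico_subset.1 (hℓF ε hε)
  filter_upwards [Ioo_mem_nhdsGT (lt_min hu htT)] with z hz
  have hFz : IntegrableOn F (Icc t z) :=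
    hF.mono_set (Icc_subset_Icc_right (hz.2.le.trans (min_le_right _ _)))
  have hint := (intervalIntegrable_iff_integrableOn_Icc_of_le hz.1.le).2 hFz
  rw [hφ z ⟨hz.1.le, hz.2.le.trans (min_le_right _ _)⟩, ← ℓ.intervalIntegral_comp_comm hint]
  calc ∫ s in t..z, ℓ (F s) ≤ ∫ _ in t..z, c + ε :=
        intervalIntegral.integral_mono_on hz.1.le
          ((intervalIntegrable_iff_integrableOn_Icc_of_le hz.1.le).2 (ℓ.integrable_comp hFz))
          intervalIntegrable_const fun s hs =>
            hbound ⟨hs.1, hs.2.trans_lt (hz.2.trans_le (min_le_left _ _))⟩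
    _ = (c + ε) * (z - t) := by rw [intervalIntegral.integral_const, smul_eq_mul, mul_comm]

theorem eventually_slope_comp_lt {w : E × ℝ → ℝ} {A : E × ℝ →L[ℝ] ℝ} {c : ℝ}
    (hw : HasFDerivAt w A (φ t, t)) (hφ : (fun z => φ z - φ t) =O[𝓝[>] t] (fun z => z - t))
    (hc : ∀ ε > 0, ∀ᶠ z in 𝓝[>] t, A (φ z - φ t, 0) ≤ (c + ε) * (z - t)) :
    ∀ ε > 0, ∀ᶠ z in 𝓝[>] t, slope (fun s => w (φ s, s)) t z < c + A (0, 1) + ε := by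
  have hpath : (fun z => (φ z, z) - (φ t, t)) =O[𝓝[>] t] (fun z => z - t) := by
    simpa only [Prod.mk_sub_mk] using hφ.prod_left (isBigO_refl _ _)
  have htend : Tendsto (fun z => (φ z, z)) (𝓝[>] t) (𝓝 (φ t, t)) := by
    refine tendsto_sub_nhds_zero_iff.1 (hpath.trans_tendsto ?_)
    exact tendsto_sub_nhds_zero_iff.2 (tendsto_nhdsWithin_of_tendsto_nhds tendsto_id)
  have hrem := (hw.isLittleO.comp_tendsto htend).trans_isBigO hpath
  intro ε hε
  filter_upwards [hrem.def (by positivity : 0 < ε / 3), hc (ε / 3) (by positivity),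
    self_mem_nhdsWithin] with z hrem_z hc_z (hz : t < z)
  have hsplit : A ((φ z, z) - (φ t, t)) = A (φ z - φ t, 0) + (z - t) * A (0, 1) := by
    have : (φ z - φ t, z - t) = (φ z - φ t, 0) + (z - t) • ((0 : E), (1 : ℝ)) := by
      ext <;> simp
    rw [Prod.mk_sub_mk, this, map_add, map_smul, smul_eq_mul]
  simp only [Function.comp_apply, Real.norm_eq_abs, abs_of_pos (sub_pos.2 hz)] at hrem_z
  rw [slope_def_field, div_lt_iff₀ (sub_pos.2 hz)]
  nlinarith [(abs_le.1 hrem_z).2, sub_pos.2 hz]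

theorem eventually_slope_barrier_lt [CompleteSpace E] {P : Type*} {w : E × ℝ → ℝ}
    {f : E → P → E} {D : Set P} {K : Set E} {d : ℝ → P} {L C : ℝ} (htT : t < T)
    (hw : DifferentiableAt ℝ w (φ t, t))
    (hLw : ∀ p ∈ D, fderiv ℝ w (φ t, t) (0, 1) + fderiv ℝ w (φ t, t) (f (φ t) p, 0) ≤ 0)
    (hfL : ∀ x ∈ K, ∀ y ∈ K, ∀ p ∈ D, ‖f x p - f y p‖ ≤ L * ‖x - y‖)
    (hφK : MapsTo φ (Icc t T) K) (hdD : ∀ s, d s ∈ D)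
    (hF : IntegrableOn (fun s => f (φ s) (d s)) (Icc t T))
    (hFC : ∀ s ∈ Icc t T, ‖f (φ s) (d s)‖ ≤ C)
    (hφ : ∀ z ∈ Icc t T, φ z - φ t = ∫ s in t..z, f (φ s) (d s)) :
    ∀ ε > 0, ∀ᶠ z in 𝓝[>] t, slope (fun s => w (φ s, s)) t z < ε := by
  set A := fderiv ℝ w (φ t, t)
  set B := A.comp (ContinuousLinearMap.inl ℝ E ℝ)
  have hO := isBigO_sub_of_eq_integral htT hFC hφ
  have hφ_cont : Tendsto (fun s => ‖φ s - φ t‖) (𝓝[≥] t) (𝓝 0) := by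
    simpa using (hO.trans_tendsto
      (tendsto_sub_nhds_zero_iff.2 (tendsto_nhdsWithin_of_tendsto_nhds tendsto_id))).norm
  have hBF : ∀ ε > 0, ∀ᶠ s in 𝓝[≥] t, B (f (φ s) (d s)) ≤ -A (0, 1) + ε := by
    intro ε hε
    have hsmall : ∀ᶠ s in 𝓝[≥] t, ‖B‖ * (L * ‖φ s - φ t‖) < ε := by
      have := (hφ_cont.const_mul L).const_mul ‖B‖
      rw [mul_zero, mul_zero] at this
      exact this.eventually_lt_const hε
    filter_upwards [hsmall, Icc_mem_nhdsGE htT] with s hs hsI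
    have hlip : B (f (φ s) (d s) - f (φ t) (d s)) ≤ ‖B‖ * (L * ‖φ s - φ t‖) :=
      (le_abs_self _).trans <| (B.le_opNorm _).trans <| mul_le_mul_of_nonneg_left
        (hfL _ (hφK hsI) _ (hφK (left_mem_Icc.2 htT.le)) _ (hdD s)) (norm_nonneg _)
    have hLie : B (f (φ t) (d s)) ≤ -A (0, 1) := by
      have := hLw (d s) (hdD s)
      simp only [B, ContinuousLinearMap.comp_apply, ContinuousLinearMap.inl_apply]
      linarith
    calc B (f (φ s) (d s)) = B (f (φ t) (d s)) + B (f (φ s) (d s) - f (φ t) (d s)) := by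
          rw [← map_add, add_sub_cancel]
      _ ≤ -A (0, 1) + ε := by linarith
  have hslope := eventually_slope_comp_lt hw.hasFDerivAt
    (hO.mono (nhdsWithin_mono _ Ioi_subset_Ici_self))
    (eventually_apply_sub_le_of_eq_integral htT hF hφ hBF)
  intro ε hε
  filter_upwards [hslope ε hε] with z hz
  linarith

end Trajectory

theorem barrier_certificate_soundness_general
    {n m : ℕ} (S X0 : Set (EuclideanSpace ℝ (Fin n))) (D : Set (EuclideanSpace ℝ (Fin m)))
    (hSopen : IsOpen S)
    (hX0S : X0 ⊆ S) (hD : IsCompact D)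
    (T : ℝ)
    (f1 : EuclideanSpace ℝ (Fin n) → EuclideanSpace ℝ (Fin n))
    (f2 : EuclideanSpace ℝ (Fin n) → EuclideanSpace ℝ (Fin m) →L[ℝ] EuclideanSpace ℝ (Fin n))
    (f : EuclideanSpace ℝ (Fin n) → EuclideanSpace ℝ (Fin m) → EuclideanSpace ℝ (Fin n))
    (hfdef : ∀ x dd, f x dd = f1 x + f2 x dd)
    (hfLip : ∀ K : Set (EuclideanSpace ℝ (Fin n)), IsCompact K → ∃ L : ℝ,
      ∀ x ∈ K, ∀ y ∈ K, ∀ dd ∈ D, ‖f x dd - f y dd‖ ≤ L * ‖x - y‖)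
    (v : EuclideanSpace ℝ (Fin n) → ℝ → ℝ)
    (hv : ContDiff ℝ 1 (fun p : EuclideanSpace ℝ (Fin n) × ℝ => v p.1 p.2))
    (hv0 : ∀ x ∈ X0, v x 0 < 0)
    (hvb : ∀ x ∈ frontier S, ∀ t ∈ Icc (0:ℝ) T, 0 ≤ v x t)
    (hLv : ∀ x ∈ closure S, ∀ dd ∈ D, ∀ t ∈ Icc (0:ℝ) T,
      fderiv ℝ (fun s => v x s) t 1 + fderiv ℝ (fun y => v y t) x (f x dd) ≤ 0) :
    ∀ x₀ ∈ X0, ∀ d : ℝ → EuclideanSpace ℝ (Fin m), Measurable d → (∀ t, d t ∈ D) →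
      ∀ φ : ℝ → EuclideanSpace ℝ (Fin n), ContinuousOn φ (Icc 0 T) → φ 0 = x₀ →
        (∀ t ∈ Icc (0:ℝ) T, φ t = x₀ + ∫ s in (0:ℝ)..t, f (φ s) (d s)) →
        ∀ t ∈ Icc (0:ℝ) T, φ t ∈ S := by
  intro x₀ hx₀ d hd hdD φ hφ hφ0 hφeq t₁ ht₁
  by_contra hout
  obtain ⟨τ, hτ, hfront, hbefore⟩ := exists_first_exit hSopen hφ (hφ0 ▸ hX0S hx₀) ht₁ hout
  have hK : IsCompact (φ '' Icc 0 T) := isCompact_Icc.image_of_continuousOn hφ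
  obtain ⟨L, hL⟩ := hfLip _ hK
  have hf_cont : ContinuousOn (Function.uncurry f) ((φ '' Icc 0 T) ×ˢ D) :=
    continuousOn_prod_of_continuousOn_lipschitzOnWith (Function.uncurry f) L.toNNReal
      (fun x _ => by simpa only [Function.uncurry_apply_pair, hfdef] using
        ((f2 x).continuous.const_add (f1 x)).continuousOn)
      (fun p hp => .of_dist_le' fun x hx y hy => by
        simpa only [Function.uncurry_apply_pair, dist_eq_norm] using hL x hx y hy p hp)
  obtain ⟨C, hF, hFC⟩ :=
    exists_bound_integrableOn_comp hK hD hf_cont hφ (mapsTo_image _ _) hd hdD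
  have hslope : ∀ t ∈ Ico 0 τ, ∀ ε > 0,
      ∀ᶠ z in 𝓝[>] t, slope (fun s => v (φ s) s) t z < ε := by
    intro t ht
    have htT : t ∈ Icc 0 T := ⟨ht.1, ht.2.le.trans hτ.2⟩
    have hsub : Icc t T ⊆ Icc 0 T := Icc_subset_Icc_left ht.1
    have hw := hv.differentiable one_ne_zero (φ t, t)
    refine eventually_slope_barrier_lt (ht.2.trans_le hτ.2) hw (fun p hp => ?_) hL
      ((mapsTo_image _ _).mono_left hsub) hdD (hF.mono_set hsub) (fun s hs => hFC s (hsub hs))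
      (fun z hz => sub_eq_integral_of_eq_add_integral hF hφeq htT (hsub hz))
    simpa only [fderiv_partial_snd hw, fderiv_partial_fst hw, ContinuousLinearMap.comp_apply,
      ContinuousLinearMap.inl_apply, ContinuousLinearMap.inr_apply] using
      hLv (φ t) (subset_closure (hbefore t ht)) p hp t htT
  have hg : ContinuousOn (fun s => v (φ s) s) (Icc 0 τ) :=
    hv.continuous.comp_continuousOn ((hφ.mono (Icc_subset_Icc_right hτ.2)).prodMk continuousOn_id)
  have hg_le := image_le_left_of_eventually_slope_lt hτ.1.le hg hslope
  linarith [hvb _ hfront τ ⟨hτ.1.le, hτ.2⟩, hv0 x₀ hx₀, hφ0 ▸ hg_le]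

/-- soundness of time-dependent barrier certificates: if a C¹ function v
satisfies v(·,0) < 0 on 𝒳₀, v ≥ 0 on ∂S × [0,T], and Lv ≤ 0 on closure(S) × D × [0,T],
then every solution of ẋ = f(x,d(t)) starting in 𝒳₀ remains in S on [0,T]. -/
theorem barrier_certificate_soundness
    {n m : ℕ} (S X0 : Set (EuclideanSpace ℝ (Fin n))) (D : Set (EuclideanSpace ℝ (Fin m)))
    (hSopen : IsOpen S) (hSbdd : Bornology.IsBounded S)
    (hX0 : IsCompact X0) (hX0S : X0 ⊆ S) (hD : IsCompact D)
    (T : ℝ) (hT : 0 < T)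
    (f1 : EuclideanSpace ℝ (Fin n) → EuclideanSpace ℝ (Fin n))
    (f2 : EuclideanSpace ℝ (Fin n) → EuclideanSpace ℝ (Fin m) →L[ℝ] EuclideanSpace ℝ (Fin n))
    (f : EuclideanSpace ℝ (Fin n) → EuclideanSpace ℝ (Fin m) → EuclideanSpace ℝ (Fin n))
    (hfdef : ∀ x dd, f x dd = f1 x + f2 x dd)
    (hfLip : ∀ K : Set (EuclideanSpace ℝ (Fin n)), IsCompact K → ∃ L : ℝ,
      ∀ x ∈ K, ∀ y ∈ K, ∀ dd ∈ D, ‖f x dd - f y dd‖ ≤ L * ‖x - y‖)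
    (v : EuclideanSpace ℝ (Fin n) → ℝ → ℝ)
    (hv : ContDiff ℝ 1 (fun p : EuclideanSpace ℝ (Fin n) × ℝ => v p.1 p.2))
    (hv0 : ∀ x ∈ X0, v x 0 < 0)
    (hvb : ∀ x ∈ frontier S, ∀ t ∈ Icc (0:ℝ) T, 0 ≤ v x t)
    (hLv : ∀ x ∈ closure S, ∀ dd ∈ D, ∀ t ∈ Icc (0:ℝ) T,
      fderiv ℝ (fun s => v x s) t 1 + fderiv ℝ (fun y => v y t) x (f x dd) ≤ 0) :
    ∀ x₀ ∈ X0, ∀ d : ℝ → EuclideanSpace ℝ (Fin m), Measurable d → (∀ t, d t ∈ D) →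
      ∀ φ : ℝ → EuclideanSpace ℝ (Fin n), ContinuousOn φ (Icc 0 T) → φ 0 = x₀ →
        (∀ t ∈ Icc (0:ℝ) T, φ t = x₀ + ∫ s in (0:ℝ)..t, f (φ s) (d s)) →
        ∀ t ∈ Icc (0:ℝ) T, φ t ∈ S :=
  barrier_certificate_soundness_general S X0 D hSopen hX0S hD T f1 f2 f hfdef hfLip v hv hv0 hvb hLv
end
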